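/- arXiv:1709.10153 — 6 statements merged into one kernel-verified Lean document; each statement's English description precedes it below -/
import Mathlib

section
/- Let n ≥ 1 and let P, Q, R be probability distributions on Fin n (nonnegative real vectors summing to 1). For every real α with 0 < α ≤ 1/2, the quantity d_α(P,Q) = (D_JS(P,Q))^α is a metric; that is: (i) d_α(P,Q) ≥ 0; (ii) d_α(P,Q) = 0 if and only if P = Q; (iii) d_α(P,Q) = d_α(Q,P); and (iv) d_α(P,Q) ≤ d_α(P,R) + d_α(R,Q). -/
noncomputable def shannonH {n : ℕ} (p : Fin n → ℝ) : ℝ :=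
  -∑ i, p i * Real.logb 2 (p i)

noncomputable def DJS {n : ℕ} (p q : Fin n → ℝ) : ℝ :=
  shannonH (fun i => (p i + q i) / 2) - (1 / 2) * shannonH p - (1 / 2) * shannonH q

noncomputable def dAlpha {n : ℕ} (α : ℝ) (p q : Fin n → ℝ) : ℝ :=
  (DJS p q) ^ α

/-!
Write `φ(a, b) = a log (2a/(a+b)) + b log (2b/(a+b))`. Then
`D_JS(P, Q) = Σᵢ φ(Pᵢ, Qᵢ) / (2 log 2)`, and `φ ≥ 0` with equality iff `a = b` by strict
concavity of `x ↦ -x log x`.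

The core is the triangle inequality for `√φ` on `[0, ∞)` (Endres–Schindelin). Let `x ≤ z`.
If `y` lies outside `[x, z]`, it follows from the monotonicity of `φ` away from the diagonal.
If `x < y < z`, the function `w ↦ √φ(w, y) - √φ(w, z)` is antitone on `[0, y]`; after
differentiating, this reduces to the one-variable inequality
`(1-t) log (1-t) + (1+t) log (1+t) ≤ -log (1-t) log (1+t)` on `[0, 1)`. Minkowski's inequality
lifts the triangle inequality to `√D_JS`, and `u ↦ u ^ (2α)` is subadditive for `2α ≤ 1`.
-/

open Real Set

/-- `a log (2a/(a+b)) + b log (2b/(a+b))`, written through `negMulLog` so that no case split at `0`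
is needed. -/
noncomputable def jsGap (a b : ℝ) : ℝ := 2 * negMulLog ((a + b) / 2) - negMulLog a - negMulLog b

lemma jsGap_comm (a b : ℝ) : jsGap a b = jsGap b a := by
  unfold jsGap; rw [add_comm]; ring

lemma jsGap_self (a : ℝ) : jsGap a a = 0 := by
  unfold jsGap; ring_nf

lemma jsGap_mul (s a b : ℝ) : jsGap (s * a) (s * b) = s * jsGap a b := by
  unfold jsGap
  rw [show (s * a + s * b) / 2 = s * ((a + b) / 2) by ring]
  simp only [negMulLog_mul]
  ring

lemma jsGap_pos {a b : ℝ} (ha : 0 ≤ a) (hb : 0 ≤ b) (hab : a ≠ b) : 0 < jsGap a b := by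
  have := strictConcaveOn_negMulLog.2 (mem_Ici.2 ha) (mem_Ici.2 hb) hab
    (by norm_num : (0 : ℝ) < 1 / 2) (by norm_num : (0 : ℝ) < 1 / 2) (by norm_num)
  simp only [smul_eq_mul] at this
  unfold jsGap
  rw [show (a + b) / 2 = 1 / 2 * a + 1 / 2 * b by ring]
  linarith

lemma jsGap_nonneg {a b : ℝ} (ha : 0 ≤ a) (hb : 0 ≤ b) : 0 ≤ jsGap a b := by
  rcases eq_or_ne a b with rfl | hab
  · rw [jsGap_self]
  · exact (jsGap_pos ha hb hab).le

lemma jsGap_eq_zero_iff {a b : ℝ} (ha : 0 ≤ a) (hb : 0 ≤ b) : jsGap a b = 0 ↔ a = b :=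
  ⟨fun h => by_contra fun hab => (jsGap_pos ha hb hab).ne' h, fun h => h ▸ jsGap_self a⟩

lemma continuous_jsGap_left (c : ℝ) : Continuous fun w => jsGap w c := by
  unfold jsGap; fun_prop

lemma hasDerivAt_jsGap_left {w c : ℝ} (hw : 0 < w) (hwc : 0 < w + c) :
    HasDerivAt (fun w => jsGap w c) (log w - log ((w + c) / 2)) w := by
  have hm : HasDerivAt (fun w => (w + c) / 2) (1 / 2) w :=
    ((hasDerivAt_id w).add_const c).div_const 2
  have hmid : HasDerivAt (fun w => negMulLog ((w + c) / 2))
      ((-log ((w + c) / 2) - 1) * (1 / 2)) w :=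
    (hasDerivAt_negMulLog (by positivity)).comp w hm
  unfold jsGap
  refine (((hmid.const_mul 2).sub (hasDerivAt_negMulLog hw.ne')).sub_const _).congr_deriv ?_
  ring

lemma jsGap_antitoneOn_left (c : ℝ) : AntitoneOn (fun w => jsGap w c) (Icc 0 c) := by
  refine antitoneOn_of_hasDerivWithinAt_nonpos (convex_Icc 0 c)
    (f' := fun w => log w - log ((w + c) / 2)) (continuous_jsGap_left c).continuousOn
    (fun w hw => ?_) (fun w hw => ?_)
  all_goals rw [interior_Icc] at hw; obtain ⟨hw₀, hwc⟩ := hw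
  · exact (hasDerivAt_jsGap_left hw₀ (by linarith)).hasDerivWithinAt
  · exact sub_nonpos.2 (log_le_log hw₀ (by linarith))

lemma jsGap_monotoneOn_left {c : ℝ} (hc : 0 ≤ c) : MonotoneOn (fun w => jsGap w c) (Ici c) := by
  refine monotoneOn_of_hasDerivWithinAt_nonneg (convex_Ici c)
    (f' := fun w => log w - log ((w + c) / 2)) (continuous_jsGap_left c).continuousOn
    (fun w hw => ?_) (fun w hw => ?_)
  all_goals rw [interior_Ici] at hw; have hcw : c < w := hw
  · exact (hasDerivAt_jsGap_left (by linarith) (by linarith)).hasDerivWithinAt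
  · exact sub_nonneg.2 (log_le_log (by linarith) (by linarith))

lemma jsGap_one_sub_one_add (t : ℝ) :
    jsGap (1 - t) (1 + t) = (1 - t) * log (1 - t) + (1 + t) * log (1 + t) := by
  simp only [jsGap, negMulLog, show (1 - t + (1 + t)) / 2 = 1 by ring, log_one]
  ring

lemma jsGap_one_sub_one_add_le {t : ℝ} (ht₀ : 0 ≤ t) (ht₁ : t < 1) :
    jsGap (1 - t) (1 + t) ≤ -log (1 - t) * log (1 + t) := by
  set H : ℝ → ℝ := fun s => -log (1 - s) * log (1 + s) - jsGap (1 - s) (1 + s) with hH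
  have hderiv : ∀ s ∈ Ico (0 : ℝ) 1,
      HasDerivAt H (s * jsGap (1 - s) (1 + s) / ((1 - s) * (1 + s))) s := by
    rintro s ⟨hs₀, hs₁⟩
    have hm : 1 - s ≠ 0 := by linarith
    have hp : 1 + s ≠ 0 := by linarith
    have dm := (hasDerivAt_id s).const_sub 1
    have dp := (hasDerivAt_id s).const_add 1
    have := (((dm.log hm).neg.mul (dp.log hp)).sub
      (((hasDerivAt_mul_log hm).comp s dm).add ((hasDerivAt_mul_log hp).comp s dp)))
    simp only [hH, jsGap_one_sub_one_add]
    refine this.congr_deriv ?_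
    simp only [id, Pi.neg_apply]
    field_simp
    ring
  have hmono : MonotoneOn H (Ico 0 1) := by
    refine monotoneOn_of_hasDerivWithinAt_nonneg (convex_Ico 0 1)
      (fun s hs => (hderiv s hs).continuousAt.continuousWithinAt)
      (fun s hs => (hderiv s (interior_subset hs)).hasDerivWithinAt)
      (fun s hs => ?_)
    rw [interior_Ico] at hs
    obtain ⟨hs₀, hs₁⟩ := hs
    exact div_nonneg (mul_nonneg hs₀.le (jsGap_nonneg (by linarith) (by linarith)))
      (mul_pos (by linarith) (by linarith)).le
  have := hmono ⟨le_rfl, zero_lt_one⟩ ⟨ht₀, ht₁⟩ ht₀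
  simp only [hH, sub_zero, add_zero, log_one, mul_zero, jsGap_self] at this
  linarith

lemma two_mul_jsGap_le {a b : ℝ} (ha : 0 < a) (hab : a ≤ b) :
    2 * jsGap a b ≤ (a + b) * ((log ((a + b) / 2) - log a) * (log b - log ((a + b) / 2))) := by
  set m := (a + b) / 2 with hm_def
  set t := (b - a) / (a + b) with ht_def
  have hm : 0 < m := by rw [hm_def]; linarith
  have hab₀ : a + b ≠ 0 := by linarith
  have hsum : a + b = 2 * m := by rw [hm_def]; ring
  have ha' : a = m * (1 - t) := by rw [hm_def, ht_def]; field_simp; ring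
  have hb' : b = m * (1 + t) := by rw [hm_def, ht_def]; field_simp; ring
  have ht₀ : 0 ≤ t := div_nonneg (by linarith) (by linarith)
  have ht₁ : t < 1 := by rw [ht_def, div_lt_one (by linarith)]; linarith
  have hjs : jsGap a b = m * jsGap (1 - t) (1 + t) := by rw [← jsGap_mul, ← ha', ← hb']
  have hloga : log m - log a = -log (1 - t) := by
    rw [ha', log_mul hm.ne' (by linarith)]; ring
  have hlogb : log b - log m = log (1 + t) := by
    rw [hb', log_mul hm.ne' (by linarith)]; ring
  rw [hjs, hloga, hlogb, hsum]
  nlinarith [mul_le_mul_of_nonneg_left (jsGap_one_sub_one_add_le ht₀ ht₁) hm.le]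

lemma hasDerivAt_sqrt_jsGap_left {w c : ℝ} (hw : 0 < w) (hc : 0 ≤ c) (hwc : w ≠ c) :
    HasDerivAt (fun w => √(jsGap w c)) ((log w - log ((w + c) / 2)) / (2 * √(jsGap w c))) w :=
  (hasDerivAt_jsGap_left hw (by linarith)).sqrt (jsGap_pos hw.le hc hwc).ne'

/-- The heart of the triangle inequality: differentiating in `b`, antitonicity amounts to
`two_mul_jsGap_le`. -/
lemma log_sub_div_sqrt_jsGap_antitoneOn {a : ℝ} (ha : 0 < a) :
    AntitoneOn (fun b => (log ((a + b) / 2) - log a) / √(jsGap a b)) (Ioi a) := by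
  have hderiv : ∀ b ∈ Ioi a, HasDerivAt (fun b => (log ((a + b) / 2) - log a) / √(jsGap a b))
      (((a + b)⁻¹ * √(jsGap a b) - (log ((a + b) / 2) - log a) *
        ((log b - log ((a + b) / 2)) / (2 * √(jsGap a b)))) / √(jsGap a b) ^ 2) b := by
    intro b (hab : a < b)
    have hnum : HasDerivAt (fun b => log ((a + b) / 2) - log a) (a + b)⁻¹ b := by
      have := ((((hasDerivAt_id b).const_add a).div_const 2).log
        (by simp only [id]; linarith)).sub_const (log a)
      refine this.congr_deriv ?_
      simp only [id]
      field_simp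
    have hden : HasDerivAt (fun b => √(jsGap a b))
        ((log b - log ((a + b) / 2)) / (2 * √(jsGap a b))) b := by
      simp only [jsGap_comm a, add_comm a]
      exact hasDerivAt_sqrt_jsGap_left (by linarith) ha.le hab.ne'
    exact hnum.div hden (sqrt_pos.2 (jsGap_pos ha.le (by linarith) hab.ne)).ne'
  refine antitoneOn_of_hasDerivWithinAt_nonpos (convex_Ioi a)
    (fun b hb => (hderiv b hb).continuousAt.continuousWithinAt)
    (fun b hb => (hderiv b (interior_subset hb)).hasDerivWithinAt) (fun b hb => ?_)
  rw [interior_Ioi] at hb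
  have hab : a < b := hb
  have hφ : 0 < jsGap a b := jsGap_pos ha.le (by linarith) hab.ne
  have hs : 0 < √(jsGap a b) := sqrt_pos.2 hφ
  have hss : √(jsGap a b) * √(jsGap a b) = jsGap a b := mul_self_sqrt hφ.le
  have hkey := two_mul_jsGap_le ha hab.le
  refine div_nonpos_of_nonpos_of_nonneg (sub_nonpos.2 ?_) (sq_nonneg _)
  rw [inv_mul_eq_div, mul_div_assoc', div_le_div_iff₀ (by linarith) (by positivity)]
  nlinarith

lemma sqrt_jsGap_sub_antitoneOn {y z : ℝ} (hyz : y ≤ z) :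
    AntitoneOn (fun w => √(jsGap w y) - √(jsGap w z)) (Icc 0 y) := by
  have hcont : Continuous fun w => √(jsGap w y) - √(jsGap w z) :=
    ((continuous_jsGap_left y).sqrt).sub (continuous_jsGap_left z).sqrt
  refine antitoneOn_of_hasDerivWithinAt_nonpos (convex_Icc 0 y) hcont.continuousOn
    (f' := fun w => (log w - log ((w + y) / 2)) / (2 * √(jsGap w y))
      - (log w - log ((w + z) / 2)) / (2 * √(jsGap w z))) (fun w hw => ?_) (fun w hw => ?_)
  all_goals rw [interior_Icc] at hw; obtain ⟨hw₀, hwy⟩ := hw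
  · exact ((hasDerivAt_sqrt_jsGap_left hw₀ (by linarith) hwy.ne).sub
      (hasDerivAt_sqrt_jsGap_left hw₀ (by linarith) (by linarith))).hasDerivWithinAt
  · have := log_sub_div_sqrt_jsGap_antitoneOn hw₀ (mem_Ioi.2 hwy)
      (mem_Ioi.2 (hwy.trans_le hyz)) hyz
    simp only at this ⊢
    have e : ∀ c, (log w - log ((w + c) / 2)) / (2 * √(jsGap w c))
        = -((log ((w + c) / 2) - log w) / √(jsGap w c)) / 2 := fun c => by ring
    rw [e, e]
    linarith

lemma sqrt_jsGap_le_add_of_le {x y z : ℝ} (hx : 0 ≤ x) (hy : 0 ≤ y) (hxz : x ≤ z) :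
    √(jsGap x z) ≤ √(jsGap x y) + √(jsGap y z) := by
  rcases le_or_gt y x with hyx | hxy
  · have := jsGap_antitoneOn_left z ⟨hy, hyx.trans hxz⟩ ⟨hx, hxz⟩ hyx
    linarith [sqrt_le_sqrt this, sqrt_nonneg (jsGap x y)]
  rcases le_or_gt z y with hzy | hyz
  · have := jsGap_monotoneOn_left hx (mem_Ici.2 hxz) (mem_Ici.2 (hxz.trans hzy)) hzy
    simp only [jsGap_comm _ x] at this
    linarith [sqrt_le_sqrt this, sqrt_nonneg (jsGap y z)]
  · have := sqrt_jsGap_sub_antitoneOn hyz.le ⟨hx, hxy.le⟩ ⟨hy, le_rfl⟩ hxy.le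
    simp only [jsGap_self, sqrt_zero] at this
    linarith

lemma sqrt_jsGap_le_add {x y z : ℝ} (hx : 0 ≤ x) (hy : 0 ≤ y) (hz : 0 ≤ z) :
    √(jsGap x z) ≤ √(jsGap x y) + √(jsGap y z) := by
  rcases le_total x z with hxz | hzx
  · exact sqrt_jsGap_le_add_of_le hx hy hxz
  · rw [jsGap_comm x z, jsGap_comm x y, jsGap_comm y z]
    linarith [sqrt_jsGap_le_add_of_le hz hy hzx]

lemma sqrt_sum_le_sqrt_sum_add_sqrt_sum {ι : Type*} (s : Finset ι) {f g h : ι → ℝ}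
    (hg : ∀ i, 0 ≤ g i) (hh : ∀ i, 0 ≤ h i) (hfgh : ∀ i ∈ s, √(f i) ≤ √(g i) + √(h i)) :
    √(∑ i ∈ s, f i) ≤ √(∑ i ∈ s, g i) + √(∑ i ∈ s, h i) := by
  refine sqrt_le_iff.2 ⟨by positivity, ?_⟩
  calc ∑ i ∈ s, f i ≤ ∑ i ∈ s, (g i + h i + 2 * (√(g i) * √(h i))) := by
        refine Finset.sum_le_sum fun i hi => ?_
        have := (sqrt_le_iff.1 (hfgh i hi)).2
        rwa [add_sq, sq_sqrt (hg i), sq_sqrt (hh i), mul_assoc, add_right_comm] at this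
    _ = ∑ i ∈ s, g i + ∑ i ∈ s, h i + 2 * ∑ i ∈ s, √(g i) * √(h i) := by
        rw [Finset.sum_add_distrib, Finset.sum_add_distrib, Finset.mul_sum]
    _ ≤ ∑ i ∈ s, g i + ∑ i ∈ s, h i + 2 * (√(∑ i ∈ s, g i) * √(∑ i ∈ s, h i)) := by
        gcongr
        exact sum_sqrt_mul_sqrt_le s hg hh
    _ = (√(∑ i ∈ s, g i) + √(∑ i ∈ s, h i)) ^ 2 := by
        rw [add_sq, sq_sqrt (Finset.sum_nonneg fun i _ => hg i),
          sq_sqrt (Finset.sum_nonneg fun i _ => hh i)]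
        ring

lemma rpow_le_rpow_add_rpow_of_le_add {a b c p : ℝ} (ha : 0 ≤ a) (hb : 0 ≤ b) (hc : 0 ≤ c)
    (habc : a ≤ b + c) (hp₀ : 0 ≤ p) (hp₁ : p ≤ 1) : a ^ p ≤ b ^ p + c ^ p :=
  (rpow_le_rpow ha habc hp₀).trans (rpow_add_le_add_rpow hb hc hp₀ hp₁)

section DJS

variable {n : ℕ}

lemma shannonH_eq_sum_negMulLog (p : Fin n → ℝ) :
    shannonH p = (∑ i, negMulLog (p i)) / log 2 := by
  simp only [shannonH, negMulLog, logb, Finset.sum_div, ← Finset.sum_neg_distrib]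
  congr 1 with i
  ring

lemma DJS_eq_sum_jsGap (p q : Fin n → ℝ) :
    DJS p q = (∑ i, jsGap (p i) (q i)) / (2 * log 2) := by
  simp only [DJS, shannonH_eq_sum_negMulLog, jsGap, Finset.sum_sub_distrib, ← Finset.mul_sum]
  field_simp

lemma DJS_comm (p q : Fin n → ℝ) : DJS p q = DJS q p := by
  simp only [DJS_eq_sum_jsGap, jsGap_comm (p _)]

variable {p q r : Fin n → ℝ}

lemma DJS_nonneg (hp : ∀ i, 0 ≤ p i) (hq : ∀ i, 0 ≤ q i) : 0 ≤ DJS p q := by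
  rw [DJS_eq_sum_jsGap]
  exact div_nonneg (Finset.sum_nonneg fun i _ => jsGap_nonneg (hp i) (hq i))
    (mul_pos two_pos (log_pos one_lt_two)).le

lemma DJS_eq_zero_iff (hp : ∀ i, 0 ≤ p i) (hq : ∀ i, 0 ≤ q i) : DJS p q = 0 ↔ p = q := by
  rw [DJS_eq_sum_jsGap, div_eq_zero_iff, or_iff_left (mul_pos two_pos (log_pos one_lt_two)).ne',
    Finset.sum_eq_zero_iff_of_nonneg fun i _ => jsGap_nonneg (hp i) (hq i), funext_iff]
  simp only [Finset.mem_univ, true_implies, jsGap_eq_zero_iff (hp _) (hq _)]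

lemma sqrt_DJS_le_add (hp : ∀ i, 0 ≤ p i) (hq : ∀ i, 0 ≤ q i) (hr : ∀ i, 0 ≤ r i) :
    √(DJS p q) ≤ √(DJS p r) + √(DJS r q) := by
  have h2 : (0 : ℝ) ≤ 2 * log 2 := (mul_pos two_pos (log_pos one_lt_two)).le
  simp only [DJS_eq_sum_jsGap, sqrt_div' _ h2, ← add_div]
  gcongr
  exact sqrt_sum_le_sqrt_sum_add_sqrt_sum _ (fun i => jsGap_nonneg (hp i) (hr i))
    (fun i => jsGap_nonneg (hr i) (hq i)) fun i _ => sqrt_jsGap_le_add (hp i) (hr i) (hq i)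

end DJS

theorem stmt_0_general (n : ℕ) (P Q R : Fin n → ℝ)
    (hP : (∀ i, 0 ≤ P i) ∧ ∑ i, P i = 1)
    (hQ : (∀ i, 0 ≤ Q i) ∧ ∑ i, Q i = 1)
    (hR : (∀ i, 0 ≤ R i) ∧ ∑ i, R i = 1)
    (α : ℝ) (hα₀ : 0 < α) (hα₁ : α ≤ 1 / 2) :
    0 ≤ dAlpha α P Q ∧
    (dAlpha α P Q = 0 ↔ P = Q) ∧
    dAlpha α P Q = dAlpha α Q P ∧
    dAlpha α P Q ≤ dAlpha α P R + dAlpha α R Q := by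
  obtain ⟨hP, -⟩ := hP
  obtain ⟨hQ, -⟩ := hQ
  obtain ⟨hR, -⟩ := hR
  have hPQ := DJS_nonneg hP hQ
  refine ⟨rpow_nonneg hPQ α, ?_, by rw [dAlpha, dAlpha, DJS_comm], ?_⟩
  · rw [dAlpha, rpow_eq_zero_iff_of_nonneg hPQ, DJS_eq_zero_iff hP hQ, and_iff_left hα₀.ne']
  · have hsqrt : ∀ x : ℝ, 0 ≤ x → x ^ α = √x ^ (2 * α) := fun x hx => by
      rw [sqrt_eq_rpow, ← rpow_mul hx]
      ring_nf
    simp only [dAlpha, hsqrt _ hPQ, hsqrt _ (DJS_nonneg hP hR), hsqrt _ (DJS_nonneg hR hQ)]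
    exact rpow_le_rpow_add_rpow_of_le_add (sqrt_nonneg _) (sqrt_nonneg _) (sqrt_nonneg _)
      (sqrt_DJS_le_add hP hQ hR) (by linarith) (by linarith)

theorem stmt_0 (n : ℕ) (hn : 1 ≤ n) (P Q R : Fin n → ℝ)
    (hP : (∀ i, 0 ≤ P i) ∧ ∑ i, P i = 1)
    (hQ : (∀ i, 0 ≤ Q i) ∧ ∑ i, Q i = 1)
    (hR : (∀ i, 0 ≤ R i) ∧ ∑ i, R i = 1)
    (α : ℝ) (hα₀ : 0 < α) (hα₁ : α ≤ 1 / 2) :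
    0 ≤ dAlpha α P Q ∧
    (dAlpha α P Q = 0 ↔ P = Q) ∧
    dAlpha α P Q = dAlpha α Q P ∧
    dAlpha α P Q ≤ dAlpha α P R + dAlpha α R Q :=
  stmt_0_general n P Q R hP hQ hR α hα₀ hα₁
end

section
/- For every real α ≥ 1, the quantity (D_JS(P,Q))^α is not a metric: there exist a natural number n and probability distributions P, Q, R on Fin n such that (D_JS(P,Q))^α > (D_JS(P,R))^α + (D_JS(R,Q))^α, i.e., the triangle inequality fails. -/
theorem stmt_1 (α : ℝ) (hα : 1 ≤ α) :
    ∃ (n : ℕ) (P Q R : Fin n → ℝ),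
      (∀ i, 0 ≤ P i) ∧ ∑ i, P i = 1 ∧
      (∀ i, 0 ≤ Q i) ∧ ∑ i, Q i = 1 ∧
      (∀ i, 0 ≤ R i) ∧ ∑ i, R i = 1 ∧
      (DJS P Q) ^ α > (DJS P R) ^ α + (DJS R Q) ^ α := by
  refine ⟨2, ![1, 0], ![0, 1], ![1/2, 1/2], ?_, ?_, ?_, ?_, ?_, ?_, ?_⟩
  · intro i; fin_cases i <;> norm_num
  · simp [Fin.sum_univ_two]
  · intro i; fin_cases i <;> norm_num
  · simp [Fin.sum_univ_two]
  · intro i; fin_cases i <;> norm_num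
  · norm_num [Fin.sum_univ_two]
  · have ha : (0:ℝ) < Real.log 2 := Real.log_pos (by norm_num)
    have ha' : Real.log 2 ≠ 0 := ne_of_gt ha
    have h4 : Real.log 4 = 2 * Real.log 2 := by
      rw [show (4:ℝ) = 2^2 by norm_num, Real.log_pow]; push_cast; ring
    have hU : Real.log 3 < 2 * Real.log 2 := by
      have := Real.log_lt_log (by norm_num : (0:ℝ) < 3) (by norm_num : (3:ℝ) < 4)
      linarith [this, h4]
    have hL : 4 * Real.log 2 < 3 * Real.log 3 := by
      have := Real.log_lt_log (by norm_num : (0:ℝ) < 16) (by norm_num : (16:ℝ) < 27)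
      rw [show (16:ℝ) = 2^4 by norm_num, show (27:ℝ) = 3^3 by norm_num,
        Real.log_pow, Real.log_pow] at this
      push_cast at this; linarith
    have hPQ : DJS ![1, 0] ![0, 1] = 1 := by
      simp [DJS, shannonH, Fin.sum_univ_two, Real.logb]
      norm_num [Real.log_inv]
    have h34 : Real.log (3/4 : ℝ) = Real.log 3 - 2 * Real.log 2 := by
      rw [Real.log_div (by norm_num) (by norm_num), h4]
    have h14 : Real.log (1/4 : ℝ) = -(2 * Real.log 2) := by
      rw [one_div, Real.log_inv, h4]
    have hc : DJS ![1, 0] ![1/2, 1/2] = 3/2 - (3/4) * (Real.log 3 / Real.log 2) := by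
      simp [DJS, shannonH, Fin.sum_univ_two, Real.logb]
      norm_num [Real.log_inv, h34, h14]
      field_simp
      ring
    have hc' : DJS ![1/2, 1/2] ![0, 1] = 3/2 - (3/4) * (Real.log 3 / Real.log 2) := by
      simp [DJS, shannonH, Fin.sum_univ_two, Real.logb]
      norm_num [Real.log_inv, h34, h14]
      field_simp
      ring
    set c : ℝ := 3/2 - (3/4) * (Real.log 3 / Real.log 2) with hcdef
    have hc0 : 0 < c := by
      have : Real.log 3 / Real.log 2 < 2 := (div_lt_iff₀ ha).mpr (by linarith)
      rw [hcdef]; nlinarith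
    have hc12 : c < 1/2 := by
      have : (4:ℝ)/3 < Real.log 3 / Real.log 2 := (lt_div_iff₀ ha).mpr (by linarith)
      rw [hcdef]; nlinarith
    clear_value c
    rw [hPQ, hc, hc', Real.one_rpow]
    have hle : c ^ α ≤ c ^ (1:ℝ) :=
      Real.rpow_le_rpow_of_exponent_ge hc0 (by linarith) hα
    rw [Real.rpow_one] at hle
    linarith
end

section
/- For every real u with 0 < u < 1 and every real α with 0 < α ≤ 1/2, one has u^α ≥ u · ln((1+u)/(2u)) / ln(2/(1+u)). (Note that ln(2/(1+u)) > 0 for 0 < u < 1.) -/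
/-!
Substituting `u = s²`, the claim for `α = 1/2` becomes `0 ≤ s · g s` with
`g s = (1 + s) log (2 / (1 + s²)) + 2 s log s`; smaller exponents only enlarge `u ^ α`.
Now `g 1 = 0` and `g' = φ` with `φ 1 = 0` and
`φ' s = 2 (s - 1)² (s + 1) / (s (1 + s²)²) ≥ 0`,
so `φ ≤ 0` on `(0, 1]`, hence `g` decreases there and stays nonnegative.
-/

open Real Set

namespace SqrtLogBound

noncomputable def g (s : ℝ) : ℝ :=
  (1 + s) * (log 2 - log (1 + s ^ 2)) + 2 * s * log s

noncomputable def φ (s : ℝ) : ℝ :=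
  log 2 + 2 * log s - log (1 + s ^ 2) + 2 - (2 * s + 2 * s ^ 2) / (1 + s ^ 2)

lemma hasDerivAt_log_one_add_sq (x : ℝ) :
    HasDerivAt (fun s : ℝ => log (1 + s ^ 2)) (2 * x / (1 + x ^ 2)) x := by
  simpa using ((hasDerivAt_pow 2 x).const_add 1).log (by positivity)

lemma hasDerivAt_φ {x : ℝ} (hx : 0 < x) :
    HasDerivAt φ (2 * (x - 1) ^ 2 * (x + 1) / (x * (1 + x ^ 2) ^ 2)) x := by
  have hfrac : HasDerivAt (fun s : ℝ => (2 * s + 2 * s ^ 2) / (1 + s ^ 2))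
      (((2 + 4 * x) * (1 + x ^ 2) - (2 * x + 2 * x ^ 2) * (2 * x)) / (1 + x ^ 2) ^ 2) x := by
    refine HasDerivAt.div ?_ ?_ (by positivity)
    · exact (((hasDerivAt_id x).const_mul 2).add ((hasDerivAt_pow 2 x).const_mul 2)).congr_deriv
        (by norm_num; ring)
    · simpa using (hasDerivAt_pow 2 x).const_add 1
  refine (((((hasDerivAt_log hx.ne').const_mul 2).const_add (log 2)).sub
    (hasDerivAt_log_one_add_sq x)).add_const 2).sub hfrac |>.congr_deriv ?_
  field_simp
  ring

lemma hasDerivAt_g {x : ℝ} (hx : 0 < x) : HasDerivAt g (φ x) x := by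
  have hlin : HasDerivAt (fun s : ℝ => 1 + s) 1 x := by
    simpa using (hasDerivAt_id x).const_add 1
  have hxlog : HasDerivAt (fun s : ℝ => 2 * s * log s) (2 * 1 * log x + 2 * x * x⁻¹) x :=
    ((hasDerivAt_id x).const_mul 2).mul (hasDerivAt_log hx.ne')
  refine ((hlin.mul ((hasDerivAt_log_one_add_sq x).const_sub (log 2))).add hxlog).congr_deriv ?_
  simp only [φ]
  field_simp
  ring

lemma monotoneOn_φ : MonotoneOn φ (Ioi 0) := by
  refine monotoneOn_of_hasDerivWithinAt_nonneg (convex_Ioi 0)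
    (fun x hx => (hasDerivAt_φ hx).continuousAt.continuousWithinAt) ?_ ?_
    (f' := fun x => 2 * (x - 1) ^ 2 * (x + 1) / (x * (1 + x ^ 2) ^ 2))
  all_goals rw [interior_Ioi]; intro x (hx : 0 < x)
  · exact (hasDerivAt_φ hx).hasDerivWithinAt
  · positivity

lemma φ_nonpos {s : ℝ} (hs₀ : 0 < s) (hs₁ : s ≤ 1) : φ s ≤ 0 := by
  have hφ₁ : φ 1 = 0 := by norm_num [φ]
  simpa [hφ₁] using monotoneOn_φ hs₀ (mem_Ioi.mpr one_pos) hs₁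

lemma antitoneOn_g : AntitoneOn g (Ioc 0 1) := by
  refine antitoneOn_of_hasDerivWithinAt_nonpos (f' := φ) (convex_Ioc 0 1)
    (fun x hx => (hasDerivAt_g hx.1).continuousAt.continuousWithinAt) ?_ ?_
  all_goals rw [interior_Ioc]
  · exact fun x hx => (hasDerivAt_g hx.1).hasDerivWithinAt
  · exact fun x hx => φ_nonpos hx.1 hx.2.le

lemma g_nonneg {s : ℝ} (hs₀ : 0 < s) (hs₁ : s ≤ 1) : 0 ≤ g s := by
  have hg₁ : g 1 = 0 := by norm_num [g]
  simpa [hg₁] using antitoneOn_g ⟨hs₀, hs₁⟩ ⟨one_pos, le_rfl⟩ hs₁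

lemma sq_mul_log_le {s : ℝ} (hs₀ : 0 < s) (hs₁ : s ≤ 1) :
    s ^ 2 * log ((1 + s ^ 2) / (2 * s ^ 2)) ≤ s * log (2 / (1 + s ^ 2)) := by
  have hg := mul_nonneg hs₀.le (g_nonneg hs₀ hs₁)
  rw [log_div (by positivity) (by positivity), log_div two_ne_zero (by positivity),
    log_mul two_ne_zero (by positivity), log_pow]
  simp only [g] at hg
  push_cast
  nlinarith

end SqrtLogBound

theorem stmt_2_general (u α : ℝ) (hu₀ : 0 < u) (hu₁ : u < 1) (hα₁ : α ≤ 1 / 2) :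
    u ^ α ≥ u * Real.log ((1 + u) / (2 * u)) / Real.log (2 / (1 + u)) := by
  have hL : 0 < log (2 / (1 + u)) := log_pos <| by rw [lt_div_iff₀ (by linarith)]; linarith
  have hs₀ : 0 < √u := sqrt_pos.mpr hu₀
  have hs₁ : √u ≤ 1 := sqrt_le_one.mpr hu₁.le
  have key := SqrtLogBound.sq_mul_log_le hs₀ hs₁
  rw [sq_sqrt hu₀.le] at key
  rw [ge_iff_le, div_le_iff₀ hL]
  calc u * log ((1 + u) / (2 * u)) ≤ √u * log (2 / (1 + u)) := key
    _ = u ^ (1 / 2 : ℝ) * log (2 / (1 + u)) := by rw [sqrt_eq_rpow]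
    _ ≤ u ^ α * log (2 / (1 + u)) :=
      mul_le_mul_of_nonneg_right (rpow_le_rpow_of_exponent_ge hu₀ hu₁.le hα₁) hL.le

theorem stmt_2 (u α : ℝ) (hu₀ : 0 < u) (hu₁ : u < 1) (hα₀ : 0 < α) (hα₁ : α ≤ 1 / 2) :
    u ^ α ≥ u * Real.log ((1 + u) / (2 * u)) / Real.log (2 / (1 + u)) :=
  stmt_2_general u α hu₀ hu₁ hα₁
end

section
/- For every real u with 0 < u < 1, one has √u ≥ u · ln((1+u)/(2u)) / ln(2/(1+u)). (Note that ln(2/(1+u)) > 0 for 0 < u < 1.) -/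
/-!
Put `s = √u`. Clearing the positive denominator `ln (2 / (1 + u))`, the inequality becomes
`(1 + s) ln ((1 + s²) / 2) ≤ 2 s ln s`. Substituting `w = (1 - s) / (1 + s)` turns this into
`L (w²) ≤ w L (w)` for `L (x) = ln ((1 + x) / (1 - x)) = 2 ∑ x^(2k+1) / (2k+1)`, which holds
term by term since `(w²)^(2k+1) ≤ w^(2k+2)` for `|w| < 1`.
-/

open Real

lemma log_one_add_sq_sub_log_one_sub_sq_le {w : ℝ} (hw : |w| < 1) :
    log (1 + w ^ 2) - log (1 - w ^ 2) ≤ w * (log (1 + w) - log (1 - w)) := by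
  have hw2 : w ^ 2 < 1 := by rwa [sq_lt_one_iff_abs_lt_one]
  refine hasSum_le (fun k => ?_)
    (hasSum_log_sub_log_of_abs_lt_one (by rwa [abs_of_nonneg (sq_nonneg w)]))
    ((hasSum_log_sub_log_of_abs_lt_one hw).mul_left w)
  have hpow : (w ^ 2) ^ (2 * k + 1) ≤ w * w ^ (2 * k + 1) := by
    rw [← pow_succ', show 2 * k + 1 + 1 = 2 * (k + 1) by ring, pow_mul]
    exact pow_le_pow_of_le_one (sq_nonneg w) hw2.le (by omega)
  have hcoef : (0 : ℝ) ≤ 2 * (1 / (2 * k + 1)) := by positivity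
  calc 2 * (1 / (2 * k + 1)) * (w ^ 2) ^ (2 * k + 1)
      ≤ 2 * (1 / (2 * k + 1)) * (w * w ^ (2 * k + 1)) := mul_le_mul_of_nonneg_left hpow hcoef
    _ = w * (2 * (1 / (2 * k + 1)) * w ^ (2 * k + 1)) := by ring

lemma one_add_mul_log_one_add_sq_div_two_le {s : ℝ} (hs : 0 < s) :
    (1 + s) * log ((1 + s ^ 2) / 2) ≤ 2 * s * log s := by
  have h1s : 0 < 1 + s := by linarith
  obtain ⟨w, hw⟩ : ∃ w, w = (1 - s) / (1 + s) := ⟨_, rfl⟩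
  have hw1 : |w| < 1 := by
    rw [hw, abs_lt, lt_div_iff₀ h1s, div_lt_one h1s]
    constructor <;> linarith
  obtain ⟨hw_lo, hw_hi⟩ := abs_lt.1 hw1
  have hw2 : w ^ 2 < 1 := by rwa [sq_lt_one_iff_abs_lt_one]
  have hL : log (1 + w) - log (1 - w) = -log s := by
    rw [← log_div (by linarith) (by linarith), ← log_inv]
    congr 1
    rw [hw, one_add_div h1s.ne', one_sub_div h1s.ne', div_div_div_cancel_right₀ h1s.ne']
    ring
  have hL2 : log (1 + w ^ 2) - log (1 - w ^ 2) = log ((1 + s ^ 2) / 2) - log s := by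
    rw [← log_div (by positivity) (by linarith), ← log_div (by positivity) hs.ne']
    congr 1
    have h1s2 : (1 + s) ^ 2 ≠ 0 := by positivity
    rw [hw, div_pow, one_add_div h1s2, one_sub_div h1s2, div_div_div_cancel_right₀ h1s2]
    ring
  have key := log_one_add_sq_sub_log_one_sub_sq_le hw1
  rw [hL, hL2, hw, div_mul_eq_mul_div, le_div_iff₀ h1s] at key
  linarith

theorem stmt_3 (u : ℝ) (hu₀ : 0 < u) (hu₁ : u < 1) :
    Real.sqrt u ≥ u * Real.log ((1 + u) / (2 * u)) / Real.log (2 / (1 + u)) := by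
  obtain ⟨s, hs, rfl⟩ : ∃ s, 0 < s ∧ s ^ 2 = u := ⟨√u, sqrt_pos.2 hu₀, sq_sqrt hu₀.le⟩
  have h1 : 0 < 1 + s ^ 2 := by positivity
  have hden : 0 < log (2 / (1 + s ^ 2)) := log_pos (by rw [lt_div_iff₀ h1]; linarith)
  have hnum : log ((1 + s ^ 2) / (2 * s ^ 2)) = log ((1 + s ^ 2) / 2) - 2 * log s := by
    rw [← div_div, log_div (by positivity) (by positivity), log_pow]
    push_cast; ring
  have hden' : log (2 / (1 + s ^ 2)) = -log ((1 + s ^ 2) / 2) := by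
    rw [← log_inv, inv_div]
  have key := one_add_mul_log_one_add_sq_div_two_le hs
  rw [sqrt_sq hs.le, ge_iff_le, div_le_iff₀ hden, hnum, hden']
  linarith [mul_le_mul_of_nonneg_left key hs.le]
end

section
/- (Kafka–Österreicher–Vincze criterion.) Let f : ℝ → ℝ be convex on [0,∞) with f(1) = 0, strictly convex at 1 (i.e., for all x, y ≥ 0 with x ≠ y and all t ∈ (0,1) such that t·x + (1−t)·y = 1, one has 0 < t·f(x) + (1−t)·f(y)), and *-self-conjugate (u·f(1/u) = f(u) for all u > 0). Let α > 0 be such that the function h_α(u) = (1 − u^α)^(1/α) / f(u) is nonincreasing on [0,1). Then for all n and all probability distributions P, Q, R on Fin n with strictly positive components, d_α(P,Q) = (Σ_i q_i·f(p_i/q_i))^α satisfies the metric axioms: d_α(P,Q) ≥ 0; d_α(P,Q) = 0 iff P = Q; d_α(P,Q) = d_α(Q,P); and d_α(P,Q) ≤ d_α(P,R) + d_α(R,Q). -/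
theorem stmt_14 (f : ℝ → ℝ) (hconv : ConvexOn ℝ (Set.Ici (0 : ℝ)) f) (hf1 : f 1 = 0)
    (hstrict : ∀ x y : ℝ, 0 ≤ x → 0 ≤ y → x ≠ y → ∀ t : ℝ, 0 < t → t < 1 →
      t * x + (1 - t) * y = 1 → 0 < t * f x + (1 - t) * f y)
    (hconj : ∀ u : ℝ, 0 < u → u * f (1 / u) = f u)
    (α : ℝ) (hα : 0 < α)
    (hmono : ∀ u v : ℝ, 0 ≤ u → u ≤ v → v < 1 →
      (1 - v ^ α) ^ (1 / α) / f v ≤ (1 - u ^ α) ^ (1 / α) / f u)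
    (n : ℕ) (P Q R : Fin n → ℝ)
    (hPpos : ∀ i, 0 < P i) (hPsum : ∑ i, P i = 1)
    (hQpos : ∀ i, 0 < Q i) (hQsum : ∑ i, Q i = 1)
    (hRpos : ∀ i, 0 < R i) (hRsum : ∑ i, R i = 1) :
    0 ≤ (∑ i, Q i * f (P i / Q i)) ^ α ∧
    ((∑ i, Q i * f (P i / Q i)) ^ α = 0 ↔ P = Q) ∧
    (∑ i, Q i * f (P i / Q i)) ^ α = (∑ i, P i * f (Q i / P i)) ^ α ∧
    (∑ i, Q i * f (P i / Q i)) ^ α ≤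
      (∑ i, R i * f (P i / R i)) ^ α + (∑ i, Q i * f (R i / Q i)) ^ α := by
  -- f is strictly positive away from 1
  have hfposx : ∀ x : ℝ, 0 < x → x ≠ 1 → 0 < f x := by
    intro x hx hne
    have hinv : (0:ℝ) < 1/x := by positivity
    have hxne : x ≠ 1/x := by
      intro h
      apply hne
      have hx2 : x * x = 1 := by
        field_simp at h
        nlinarith [h]
      nlinarith
    have hx1 : (0:ℝ) < x + 1 := by linarith
    have ht1 : (0:ℝ) < 1/(x+1) := by positivity
    have ht2 : 1/(x+1) < 1 := by rw [div_lt_one hx1]; linarith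
    have hsum : (1/(x+1)) * x + (1 - 1/(x+1)) * (1/x) = 1 := by
      field_simp
      ring
    have h := hstrict x (1/x) hx.le hinv.le hxne _ ht1 ht2 hsum
    have hc := hconj x hx
    have hexp : ((1/(x+1)) * f x + (1 - 1/(x+1)) * f (1/x)) * (x*(x+1)) =
        x * f x + x * (x * f (1/x)) := by
      field_simp
      ring
    have h' : 0 < x * f x + x * (x * f (1/x)) := by
      rw [← hexp]
      exact mul_pos h (by positivity)
    rw [hc] at h'
    nlinarith [h']
  have hfpos : ∀ x : ℝ, 0 ≤ x → x ≠ 1 → 0 < f x := by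
    intro x hx hne
    rcases eq_or_lt_of_le hx with h0 | h0
    · have h2 := hfposx (1/2) (by norm_num) (by norm_num)
      have hc := hconv.2 (Set.mem_Ici.mpr (le_refl (0:ℝ)))
        (Set.mem_Ici.mpr (by norm_num : (0:ℝ) ≤ 1))
        (by norm_num : (0:ℝ) ≤ 1/2) (by norm_num : (0:ℝ) ≤ 1/2) (by norm_num)
      simp only [smul_eq_mul] at hc
      norm_num at hc
      rw [hf1] at hc
      rw [← h0]
      nlinarith [h2, hc]
    · exact hfposx x h0 hne
  have hf0 : ∀ x : ℝ, 0 ≤ x → 0 ≤ f x := by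
    intro x hx
    rcases eq_or_ne x 1 with h | h
    · simp [h, hf1]
    · exact (hfpos x hx h).le
  -- f is nonincreasing on [0,1]
  have hfmono : ∀ a b : ℝ, 0 ≤ a → a ≤ b → b ≤ 1 → f b ≤ f a := by
    intro a b ha hab hb1
    rcases eq_or_lt_of_le hab with rfl | hab
    · exact le_refl _
    have h1a : (0:ℝ) < 1 - a := by linarith
    set t := (1-b)/(1-a) with ht
    have ht0 : 0 ≤ t := div_nonneg (by linarith) h1a.le
    have ht1 : t ≤ 1 := by rw [ht, div_le_one h1a]; linarith
    have hcvx := hconv.2 (Set.mem_Ici.mpr ha) (Set.mem_Ici.mpr (by norm_num : (0:ℝ) ≤ 1))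
      ht0 (by linarith : (0:ℝ) ≤ 1 - t) (by ring)
    simp only [smul_eq_mul] at hcvx
    have harg : t * a + (1-t) * 1 = b := by
      rw [ht]; field_simp; ring
    rw [harg, hf1] at hcvx
    have hfa := hf0 a ha
    nlinarith [hcvx]
  -- consequence of hmono in power form
  have hkey : ∀ u v : ℝ, 0 ≤ u → u ≤ v → v < 1 →
      f u ^ α * (1 - v ^ α) ≤ f v ^ α * (1 - u ^ α) := by
    intro u v hu huv hv
    have hfu : 0 < f u := hfpos u hu (by intro h; rw [h] at huv; linarith)
    have hfv : 0 < f v := hfpos v (hu.trans huv) (ne_of_lt hv)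
    have h := hmono u v hu huv hv
    rw [div_le_div_iff₀ hfv hfu] at h
    have hvα : v ^ α ≤ 1 := Real.rpow_le_one (hu.trans huv) hv.le hα.le
    have huα : u ^ α ≤ 1 := Real.rpow_le_one hu (by linarith) hα.le
    have h2 : ((1 - v ^ α) ^ (1/α) * f u) ^ α ≤ ((1 - u ^ α) ^ (1/α) * f v) ^ α :=
      Real.rpow_le_rpow (mul_nonneg (Real.rpow_nonneg (by linarith) _) hfu.le) h hα.le
    rw [Real.mul_rpow (Real.rpow_nonneg (by linarith) _) hfu.le,
        Real.mul_rpow (Real.rpow_nonneg (by linarith) _) hfv.le,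
        one_div, Real.rpow_inv_rpow (by linarith) hα.ne',
        Real.rpow_inv_rpow (by linarith) hα.ne'] at h2
    linarith [h2]
  -- α ≤ 1
  have hα1 : α ≤ 1 := by
    have hf0pos : 0 < f 0 := hfpos 0 le_rfl (by norm_num)
    have hfhalf : 0 < f (1/2) := hfpos (1/2) (by norm_num) (by norm_num)
    have hk := hkey 0 (1/2) le_rfl (by norm_num) (by norm_num)
    rw [Real.zero_rpow hα.ne'] at hk
    have hc := hconv.2 (Set.mem_Ici.mpr (le_refl (0:ℝ)))
      (Set.mem_Ici.mpr (by norm_num : (0:ℝ) ≤ 1))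
      (by norm_num : (0:ℝ) ≤ 1/2) (by norm_num : (0:ℝ) ≤ 1/2) (by norm_num)
    simp only [smul_eq_mul] at hc
    norm_num at hc
    rw [hf1] at hc
    have hle : f (1/2) ^ α ≤ (f 0 / 2) ^ α := by
      apply Real.rpow_le_rpow hfhalf.le _ hα.le
      linarith [hc]
    have hf0α : (0:ℝ) < f 0 ^ α := Real.rpow_pos_of_pos hf0pos α
    have hmul2 : (f 0 / 2) ^ α = f 0 ^ α * (1/2:ℝ) ^ α := by
      rw [show f 0 / 2 = f 0 * (1/2) by ring,
        Real.mul_rpow hf0pos.le (by norm_num : (0:ℝ) ≤ 1/2)]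
    have hs : 1 - (1/2:ℝ)^α ≤ (1/2:ℝ)^α := by
      have h1 : f 0 ^ α * (1 - (1/2:ℝ)^α) ≤ f 0 ^ α * (1/2:ℝ)^α := by
        calc f 0 ^ α * (1 - (1/2:ℝ)^α) ≤ f (1/2) ^ α * (1 - 0) := hk
          _ = f (1/2) ^ α := by ring
          _ ≤ (f 0 / 2) ^ α := hle
          _ = f 0 ^ α * (1/2:ℝ)^α := hmul2
      exact le_of_mul_le_mul_left h1 hf0α
    have h12 : ((1:ℝ)/2) ^ (1:ℝ) ≤ ((1:ℝ)/2) ^ α := by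
      rw [Real.rpow_one]
      linarith
    exact (Real.rpow_le_rpow_left_iff_of_base_lt_one (by norm_num) (by norm_num)).mp h12
  -- Key lemma: for 0 < p ≤ 1, 0 < r : f p ^ α ≤ (r * f (p/r)) ^ α + f r ^ α
  have hK : ∀ p r : ℝ, 0 < p → p ≤ 1 → 0 < r →
      f p ^ α ≤ (r * f (p/r)) ^ α + f r ^ α := by
    intro p r hp hp1 hr
    have hfpr0 : 0 ≤ f (p/r) := hf0 _ (by positivity)
    have ht1 : (0:ℝ) ≤ (r * f (p/r)) ^ α := Real.rpow_nonneg (mul_nonneg hr.le hfpr0) α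
    have ht2 : (0:ℝ) ≤ f r ^ α := Real.rpow_nonneg (hf0 r hr.le) α
    rcases le_or_gt r p with hrp | hpr
    · have h1 : f p ≤ f r := hfmono r p hr.le hrp hp1
      have := Real.rpow_le_rpow (hf0 p hp.le) h1 hα.le
      linarith
    rcases le_or_gt 1 r with h1r | hr1
    · have hpr1 : p / r ≤ p := div_le_self hp.le h1r
      have h1 : f p ≤ f (p/r) := hfmono (p/r) p (by positivity) hpr1 hp1
      have h2 : f (p/r) ≤ r * f (p/r) := le_mul_of_one_le_left hfpr0 h1r
      have := Real.rpow_le_rpow (hf0 p hp.le) (h1.trans h2) hα.le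
      linarith
    · -- p < r < 1
      have hv1 : p / r < 1 := (div_lt_one hr).mpr hpr
      have hvp : p ≤ p / r := by
        rw [le_div_iff₀ hr]
        nlinarith
      have k1 := hkey p r hp.le hpr.le hr1
      have k2 := hkey p (p/r) hp.le hvp hv1
      have hrα : (0:ℝ) ≤ r ^ α := Real.rpow_nonneg hr.le α
      have k2' : r ^ α * (f p ^ α * (1 - (p/r) ^ α)) ≤
          r ^ α * (f (p/r) ^ α * (1 - p ^ α)) := mul_le_mul_of_nonneg_left k2 hrα
      have hmul : r ^ α * (p/r) ^ α = p ^ α := by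
        have hrr : r * (p/r) = p := by field_simp
        rw [← Real.mul_rpow hr.le (le_of_lt (div_pos hp hr)), hrr]
      have hrw : (r * f (p/r)) ^ α = r ^ α * f (p/r) ^ α := Real.mul_rpow hr.le hfpr0
      have hp1' : p ^ α < 1 := Real.rpow_lt_one hp.le (by linarith) hα
      have h3 : f p ^ α * (r ^ α * (p/r) ^ α) = f p ^ α * p ^ α := by rw [hmul]
      have key3 : f p ^ α * (1 - p ^ α) ≤ (f r ^ α + r ^ α * f (p/r) ^ α) * (1 - p ^ α) := by
        nlinarith [k1, k2', h3]
      have hfinal : f p ^ α ≤ f r ^ α + r ^ α * f (p/r) ^ α :=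
        le_of_mul_le_mul_right (by linarith [key3]) (by linarith : (0:ℝ) < 1 - p ^ α)
      rw [hrw]
      linarith
  -- symmetry of the divergence kernel
  have hd_sym : ∀ p q : ℝ, 0 < p → 0 < q → q * f (p/q) = p * f (q/p) := by
    intro p q hp hq
    have hc := hconj (p/q) (by positivity)
    rw [one_div_div] at hc
    calc q * f (p/q) = q * (p/q * f (q/p)) := by rw [hc]
      _ = p * f (q/p) := by field_simp
  -- pointwise triangle inequality
  have hmain : ∀ p q r : ℝ, 0 < p → 0 < q → 0 < r → p ≤ q →
      (q * f (p/q)) ^ α ≤ (r * f (p/r)) ^ α + (q * f (r/q)) ^ α := by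
    intro p q r hp hq hr hpq
    have h := hK (p/q) (r/q) (by positivity) ((div_le_one hq).mpr hpq) (by positivity)
    have e1 : (p/q)/(r/q) = p/r := by
      field_simp
    rw [e1] at h
    have hqα : (0:ℝ) ≤ q ^ α := Real.rpow_nonneg hq.le α
    calc (q * f (p/q)) ^ α = q ^ α * f (p/q) ^ α :=
          Real.mul_rpow hq.le (hf0 _ (by positivity))
      _ ≤ q ^ α * (((r/q) * f (p/r)) ^ α + f (r/q) ^ α) := mul_le_mul_of_nonneg_left h hqα
      _ = (q * ((r/q) * f (p/r))) ^ α + (q * f (r/q)) ^ α := by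
          rw [mul_add, ← Real.mul_rpow hq.le (mul_nonneg (by positivity) (hf0 _ (by positivity))),
            ← Real.mul_rpow hq.le (hf0 _ (by positivity))]
      _ = (r * f (p/r)) ^ α + (q * f (r/q)) ^ α := by
          rw [show q * ((r/q) * f (p/r)) = r * f (p/r) by field_simp]
  have hptw : ∀ p q r : ℝ, 0 < p → 0 < q → 0 < r →
      (q * f (p/q)) ^ α ≤ (r * f (p/r)) ^ α + (q * f (r/q)) ^ α := by
    intro p q r hp hq hr
    rcases le_total p q with hpq | hqp
    · exact hmain p q r hp hq hr hpq
    · have h := hmain q p r hq hp hr hqp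
      rw [hd_sym q p hq hp] at h
      rw [hd_sym r p hr hp] at h
      rw [hd_sym r q hr hq]
      linarith [h]
  -- nonnegativity of the divergence
  have hterm : ∀ (A B : Fin n → ℝ), (∀ i, 0 < A i) → (∀ i, 0 < B i) →
      ∀ i, 0 ≤ B i * f (A i / B i) := by
    intro A B hA hB i
    exact mul_nonneg (hB i).le (hf0 _ (div_pos (hA i) (hB i)).le)
  have hDQP : 0 ≤ ∑ i, Q i * f (P i / Q i) :=
    Finset.sum_nonneg fun i _ => hterm P Q hPpos hQpos i
  refine ⟨Real.rpow_nonneg hDQP α, ?_, ?_, ?_⟩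
  · -- zero iff equal
    constructor
    · intro h
      have hD0 : ∑ i, Q i * f (P i / Q i) = 0 := (Real.rpow_eq_zero hDQP hα.ne').mp h
      funext i
      have hz := (Finset.sum_eq_zero_iff_of_nonneg
        (fun i _ => hterm P Q hPpos hQpos i)).mp hD0 i (Finset.mem_univ i)
      have hfz : f (P i / Q i) = 0 := by
        have := (hQpos i).ne'
        rcases mul_eq_zero.mp hz with h' | h'
        · exact absurd h' this
        · exact h'
      by_contra hne
      have hne1 : P i / Q i ≠ 1 := by
        intro h'
        rw [div_eq_one_iff_eq (hQpos i).ne'] at h'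
        exact hne h'
      exact absurd hfz (hfpos _ (div_pos (hPpos i) (hQpos i)).le hne1).ne'
    · rintro rfl
      have : ∑ i, P i * f (P i / P i) = 0 := by
        apply Finset.sum_eq_zero
        intro i _
        rw [div_self (hPpos i).ne', hf1, mul_zero]
      rw [this, Real.zero_rpow hα.ne']
  · -- symmetry
    congr 1
    exact Finset.sum_congr rfl fun i _ => hd_sym (P i) (Q i) (hPpos i) (hQpos i)
  · -- triangle inequality
    set a : Fin n → ℝ := fun i => R i * f (P i / R i) with ha
    set b : Fin n → ℝ := fun i => Q i * f (R i / Q i) with hb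
    set c : Fin n → ℝ := fun i => Q i * f (P i / Q i) with hc
    have hanon : ∀ i, 0 ≤ a i := hterm P R hPpos hRpos
    have hbnon : ∀ i, 0 ≤ b i := hterm R Q hRpos hQpos
    have hcnon : ∀ i, 0 ≤ c i := hterm P Q hPpos hQpos
    have hαinv : (1:ℝ) ≤ 1/α := by
      rw [le_div_iff₀ hα]
      linarith
    -- pointwise : c i ≤ (a i ^ α + b i ^ α) ^ (1/α)
    have hpt : ∀ i, c i ≤ (a i ^ α + b i ^ α) ^ (1/α) := by
      intro i
      have h := hptw (P i) (Q i) (R i) (hPpos i) (hQpos i) (hRpos i)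
      have h2 : (c i ^ α) ^ α⁻¹ ≤ (a i ^ α + b i ^ α) ^ α⁻¹ :=
        Real.rpow_le_rpow (Real.rpow_nonneg (hcnon i) α) h (by positivity)
      rw [Real.rpow_rpow_inv (hcnon i) hα.ne'] at h2
      rwa [one_div]
    have hsum1 : ∑ i, c i ≤ ∑ i, (a i ^ α + b i ^ α) ^ (1/α) :=
      Finset.sum_le_sum fun i _ => hpt i
    -- Minkowski with exponent 1/α
    have hmink := Real.Lp_add_le_of_nonneg (s := Finset.univ)
      (f := fun i => a i ^ α) (g := fun i => b i ^ α) (p := 1/α) hαinv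
      (fun i _ => Real.rpow_nonneg (hanon i) α) (fun i _ => Real.rpow_nonneg (hbnon i) α)
    have e2 : ∀ i : Fin n, (a i ^ α) ^ (1/α) = a i := by
      intro i; rw [one_div, Real.rpow_rpow_inv (hanon i) hα.ne']
    have e3 : ∀ i : Fin n, (b i ^ α) ^ (1/α) = b i := by
      intro i; rw [one_div, Real.rpow_rpow_inv (hbnon i) hα.ne']
    rw [show (1/(1/α)) = α by rw [one_div_one_div]] at hmink
    simp only [e2, e3] at hmink
    -- hmink : (∑ i, (a i ^ α + b i ^ α) ^ (1/α)) ^ α ≤ (∑ i, a i) ^ α + (∑ i, b i) ^ α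
    calc (∑ i, c i) ^ α ≤ (∑ i, (a i ^ α + b i ^ α) ^ (1/α)) ^ α :=
          Real.rpow_le_rpow (Finset.sum_nonneg fun i _ => hcnon i) hsum1 hα.le
      _ ≤ (∑ i, a i) ^ α + (∑ i, b i) ^ α := hmink
end

section
/- For all reals u, α, β with 0 < u < 1 and 0 < β ≤ 1/2: u^β ≥ u^(1/2) ≥ u · ln((1+u)/(2u)) / ln(2/(1+u)); in particular the chained inequality u^β ≥ u · ln((1+u)/(2u)) / ln(2/(1+u)) holds. -/
/-!
Since `u < 1`, `u ^ β` decreases in `β`, so everything reduces to `β = 1/2`. Writing `u = t²` and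
`log ((1 + t²) / (2t²)) = 2 log t⁻¹ - log (2 / (1 + t²))`, that case becomes
`2 t log t⁻¹ ≤ (1 + t) log (2 / (1 + t²))`. The two sides agree to third order at `t = 1`, so
crude bounds on `log` do not suffice; the rational bounds
`3 (x² - 1) / (x² + 4x + 1) ≤ log x ≤ (x - 1)(x + 5) / (2 (2x + 1))` on `[1, ∞)`, exact to orders
`5` and `4` at `x = 1`, reduce it to the polynomial inequality `0 ≤ (1 - t)⁴ (2t² - 5t + 5)`.
-/

open Real Set

lemma le_of_hasDerivAt_nonneg_of_le {f f' : ℝ → ℝ} {a x : ℝ}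
    (hf : ∀ y, a ≤ y → HasDerivAt f (f' y) y) (hf' : ∀ y, a < y → 0 ≤ f' y) (hx : a ≤ x) :
    f a ≤ f x := by
  refine monotoneOn_of_hasDerivWithinAt_nonneg (f' := f') (convex_Ici a)
    (fun y hy ↦ (hf y hy).continuousAt.continuousWithinAt) (fun y hy ↦ ?_) (fun y hy ↦ ?_)
    self_mem_Ici hx hx
  · rw [interior_Ici] at hy ⊢
    exact (hf y (le_of_lt hy)).hasDerivWithinAt
  · rw [interior_Ici] at hy
    exact hf' y hy

namespace Real

lemma three_mul_sq_sub_one_div_le_log {x : ℝ} (hx : 1 ≤ x) :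
    3 * (x ^ 2 - 1) / (x ^ 2 + 4 * x + 1) ≤ log x := by
  have hderiv : ∀ y : ℝ, 1 ≤ y → HasDerivAt (fun y ↦ log y - 3 * (y ^ 2 - 1) / (y ^ 2 + 4 * y + 1))
      ((y - 1) ^ 4 / (y * (y ^ 2 + 4 * y + 1) ^ 2)) y := by
    intro y hy
    have hy₀ : y ≠ 0 := by positivity
    have hden : y ^ 2 + 4 * y + 1 ≠ 0 := by positivity
    have hquot := (((hasDerivAt_pow 2 y).sub_const 1).const_mul 3).div
      (((hasDerivAt_pow 2 y).add ((hasDerivAt_id y).const_mul 4)).add_const 1) hden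
    refine ((hasDerivAt_log hy₀).sub hquot).congr_deriv ?_
    norm_num
    field_simp
    ring
  have hmono := le_of_hasDerivAt_nonneg_of_le hderiv (fun y hy ↦ by positivity) hx
  norm_num at hmono
  linarith

lemma log_le_sub_one_mul_add_five_div {x : ℝ} (hx : 1 ≤ x) :
    log x ≤ (x - 1) * (x + 5) / (2 * (2 * x + 1)) := by
  have hderiv : ∀ y : ℝ, 1 ≤ y → HasDerivAt (fun y ↦ (y - 1) * (y + 5) / (2 * (2 * y + 1)) - log y)
      ((y - 1) ^ 3 / (y * (2 * y + 1) ^ 2)) y := by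
    intro y hy
    have hy₀ : y ≠ 0 := by positivity
    have hden : 2 * (2 * y + 1) ≠ 0 := by positivity
    refine (((((hasDerivAt_id y).sub_const 1).mul ((hasDerivAt_id y).add_const 5)).div
        ((((hasDerivAt_id y).const_mul 2).add_const 1).const_mul 2) hden).sub
      (hasDerivAt_log hy₀)).congr_deriv ?_
    norm_num
    field_simp
    ring
  have hmono := le_of_hasDerivAt_nonneg_of_le hderiv
    (fun y hy ↦ div_nonneg (pow_nonneg (sub_nonneg.2 hy.le) 3) (by positivity)) hx
  norm_num at hmono
  linarith

lemma two_mul_mul_log_inv_le {t : ℝ} (ht₀ : 0 < t) (ht₁ : t ≤ 1) :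
    2 * t * log t⁻¹ ≤ (1 + t) * log (2 / (1 + t ^ 2)) := by
  have hupper : 2 * t * log t⁻¹ ≤ (1 - t) * (1 + 5 * t) / (2 + t) :=
    calc 2 * t * log t⁻¹ ≤ 2 * t * ((t⁻¹ - 1) * (t⁻¹ + 5) / (2 * (2 * t⁻¹ + 1))) := by
          gcongr
          exact log_le_sub_one_mul_add_five_div ((one_le_inv₀ ht₀).2 ht₁)
      _ = (1 - t) * (1 + 5 * t) / (2 + t) := by field_simp
  have hlower : 3 * (1 + t) ^ 2 * (1 - t) * (3 + t ^ 2) / (t ^ 4 + 10 * t ^ 2 + 13) ≤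
      (1 + t) * log (2 / (1 + t ^ 2)) :=
    calc 3 * (1 + t) ^ 2 * (1 - t) * (3 + t ^ 2) / (t ^ 4 + 10 * t ^ 2 + 13)
        = (1 + t) * (3 * ((2 / (1 + t ^ 2)) ^ 2 - 1) /
            ((2 / (1 + t ^ 2)) ^ 2 + 4 * (2 / (1 + t ^ 2)) + 1)) := by
          field_simp
          ring
      _ ≤ (1 + t) * log (2 / (1 + t ^ 2)) := by
          gcongr
          refine three_mul_sq_sub_one_div_le_log ?_
          rw [le_div_iff₀ (by positivity)]
          nlinarith
  have hrational : (1 - t) * (1 + 5 * t) / (2 + t) ≤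
      3 * (1 + t) ^ 2 * (1 - t) * (3 + t ^ 2) / (t ^ 4 + 10 * t ^ 2 + 13) := by
    rw [div_le_div_iff₀ (by positivity) (by positivity)]
    have hpoly : 0 ≤ (1 - t) ^ 4 * (2 * t ^ 2 - 5 * t + 5) :=
      mul_nonneg (by positivity) (by nlinarith [sq_nonneg (4 * t - 5)])
    linear_combination hpoly
  linarith

lemma mul_log_div_le_sqrt {u : ℝ} (hu₀ : 0 < u) (hu₁ : u < 1) :
    u * log ((1 + u) / (2 * u)) / log (2 / (1 + u)) ≤ √u := by
  obtain ⟨t, ht₀, rfl⟩ : ∃ t, 0 < t ∧ t ^ 2 = u := ⟨√u, sqrt_pos.2 hu₀, sq_sqrt hu₀.le⟩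
  have ht₁ : t < 1 := by nlinarith
  have hlog_pos : 0 < log (2 / (1 + t ^ 2)) :=
    log_pos (by rw [lt_div_iff₀ (by positivity)]; linarith)
  have hsplit : log ((1 + t ^ 2) / (2 * t ^ 2)) = 2 * log t⁻¹ - log (2 / (1 + t ^ 2)) := by
    rw [log_div (by positivity) (by positivity), log_div (by norm_num) (by positivity),
      log_mul (by norm_num) (by positivity), log_inv, log_pow]
    push_cast
    ring
  rw [sqrt_sq ht₀.le, div_le_iff₀ hlog_pos, hsplit]
  linear_combination t * two_mul_mul_log_inv_le ht₀ ht₁.le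

end Real

theorem stmt_16_general (u β : ℝ) (hu₀ : 0 < u) (hu₁ : u < 1) (hβ₁ : β ≤ 1 / 2) :
    u ^ β ≥ u ^ ((1 : ℝ) / 2) ∧
    u ^ ((1 : ℝ) / 2) ≥ u * Real.log ((1 + u) / (2 * u)) / Real.log (2 / (1 + u)) ∧
    u ^ β ≥ u * Real.log ((1 + u) / (2 * u)) / Real.log (2 / (1 + u)) := by
  have hβ : u ^ β ≥ u ^ ((1 : ℝ) / 2) := rpow_le_rpow_of_exponent_ge hu₀ hu₁.le hβ₁
  have hhalf : u ^ ((1 : ℝ) / 2) ≥ u * log ((1 + u) / (2 * u)) / log (2 / (1 + u)) := by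
    rw [← sqrt_eq_rpow]
    exact mul_log_div_le_sqrt hu₀ hu₁
  exact ⟨hβ, hhalf, hhalf.trans hβ⟩

theorem stmt_16 (u β : ℝ) (hu₀ : 0 < u) (hu₁ : u < 1) (hβ₀ : 0 < β) (hβ₁ : β ≤ 1 / 2) :
    u ^ β ≥ u ^ ((1 : ℝ) / 2) ∧
    u ^ ((1 : ℝ) / 2) ≥ u * Real.log ((1 + u) / (2 * u)) / Real.log (2 / (1 + u)) ∧
    u ^ β ≥ u * Real.log ((1 + u) / (2 * u)) / Real.log (2 / (1 + u)) :=
  stmt_16_general u β hu₀ hu₁ hβ₁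
end
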